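/- arXiv:1709.03518 — 3 statements merged into one kernel-verified Lean document; each statement's English description precedes it below -/
import Mathlib

section
/- Let d > 1 be an integer and m : Fin n → ℤ with all mᵢ ≥ 0, satisfying (d-1)(d-2)/2 - ∑ mᵢ(mᵢ-1)/2 = 0 and -2 ≤ d² - ∑ mᵢ² ≤ 1. Then mᵢ < d for every i. -/
/-!
Doubling the genus condition gives `∑ mᵢ(mᵢ - 1) = (d - 1)(d - 2)`, a sum of nonnegative terms.
A multiplicity `mᵢ ≥ d` would make the single term `mᵢ(mᵢ - 1) ≥ d(d - 1)` exceed
`(d - 1)(d - 2)`, since `d > 1`.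
-/

open Finset

lemma Int.mul_sub_one_nonneg (x : ℤ) : 0 ≤ x * (x - 1) := by
  rcases le_or_gt x 0 with hx | hx
  · exact mul_nonneg_of_nonpos_of_nonpos hx (by omega)
  · exact mul_nonneg hx.le (by omega)

lemma sum_mul_sub_one_eq_of_arithmeticGenus_eq_zero {ι : Type*} [Fintype ι] (d : ℤ) (m : ι → ℤ)
    (hb : (d - 1) * (d - 2) / 2 - ∑ i, m i * (m i - 1) / 2 = 0) :
    ∑ i, m i * (m i - 1) = (d - 1) * (d - 2) := by
  have hd : 2 ∣ (d - 1) * (d - 2) := by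
    simpa [sub_sub, show (1 : ℤ) + 1 = 2 by norm_num] using (Int.even_mul_pred_self (d - 1)).two_dvd
  have hm : ∀ i ∈ univ, 2 ∣ m i * (m i - 1) := fun i _ ↦ (Int.even_mul_pred_self (m i)).two_dvd
  rw [← Int.sum_div hm, sub_eq_zero] at hb
  exact (Int.ediv_left_inj (dvd_sum hm) hd).mp hb.symm

lemma lt_of_sum_mul_sub_one_eq {ι : Type*} [Fintype ι] {d : ℤ} {m : ι → ℤ} (hd : 1 < d)
    (hsum : ∑ i, m i * (m i - 1) = (d - 1) * (d - 2)) (i : ι) : m i < d := by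
  have hle : m i * (m i - 1) ≤ (d - 1) * (d - 2) :=
    hsum ▸ single_le_sum (fun j _ ↦ Int.mul_sub_one_nonneg (m j)) (mem_univ i)
  by_contra! hi
  nlinarith

theorem mult_lt_degree_general (n : ℕ) (d : ℤ) (m : Fin n → ℤ)
    (hd : 1 < d)
    (hb : (d - 1) * (d - 2) / 2 - ∑ i, m i * (m i - 1) / 2 = 0) :
    ∀ i, m i < d :=
  lt_of_sum_mul_sub_one_eq hd (sum_mul_sub_one_eq_of_arithmeticGenus_eq_zero d m hb)

theorem mult_lt_degree (n : ℕ) (d : ℤ) (m : Fin n → ℤ)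
    (hd : 1 < d) (hm : ∀ i, 0 ≤ m i)
    (hb : (d - 1) * (d - 2) / 2 - ∑ i, m i * (m i - 1) / 2 = 0)
    (hc1 : -2 ≤ d ^ 2 - ∑ i, (m i) ^ 2)
    (hc2 : d ^ 2 - ∑ i, (m i) ^ 2 ≤ 1) :
    ∀ i, m i < d :=
  mult_lt_degree_general n d m hd hb
end

section
/- (Noether's lemma) Let d > 0 be an integer and m : Fin n → ℤ with all mᵢ ≥ 0, satisfying the genus-0 condition (d-1)(d-2)/2 - ∑ mᵢ(mᵢ-1)/2 = 0 and -2 ≤ c ≤ 1 where c = d² - ∑ mᵢ². If d = 1 assume additionally c < 0. Then there exist three distinct indices i₁, i₂, i₃ with m_{i₁} + m_{i₂} + m_{i₃} > d. -/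
/-!
Take the three largest multiplicities `a, b ≥ e` and assume `a + b + e ≤ d`. The genus condition
says `∑ mᵢ² - ∑ mᵢ = (d - 1)(d - 2)`, so `∑ mᵢ = 3d - 2 - c > d`. Since every other
multiplicity lies in `[0, e]`, `∑ mᵢ (mᵢ - e) ≤ a (a - e) + b (b - e) ≤ (d - 2e)(d - 3e)`, which
contradicts `c ≥ -2` as soon as `e ≥ 1`. If `e = 0` only `a` and `b` are nonzero, so `∑ mᵢ ≤ d`.
-/

open Finset

theorem exists_three_largest {ι α : Type*} [Fintype ι] [LinearOrder α] (f : ι → α)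
    (h : 3 ≤ Fintype.card ι) :
    ∃ i₁ i₂ i₃, i₁ ≠ i₂ ∧ i₁ ≠ i₃ ∧ i₂ ≠ i₃ ∧ f i₃ ≤ f i₁ ∧ f i₃ ≤ f i₂ ∧
      ∀ j, j ≠ i₁ → j ≠ i₂ → f j ≤ f i₃ := by
  classical
  obtain ⟨i₁, -, h₁⟩ := (univ : Finset ι).exists_max_image f
    (by rw [← card_pos, card_univ]; omega)
  obtain ⟨i₂, hi₂, h₂⟩ := (univ.erase i₁).exists_max_image f
    (by rw [← card_pos, card_erase_of_mem (mem_univ _), card_univ]; omega)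
  obtain ⟨i₃, hi₃, h₃⟩ := ((univ.erase i₁).erase i₂).exists_max_image f
    (by rw [← card_pos, card_erase_of_mem hi₂, card_erase_of_mem (mem_univ _), card_univ]; omega)
  simp only [mem_erase, mem_univ, and_true] at hi₂ hi₃ h₂ h₃
  exact ⟨i₁, i₂, i₃, hi₂.symm, hi₃.2.symm, hi₃.1.symm, h₁ _ (mem_univ _), h₂ _ hi₃.2,
    fun j hj₁ hj₂ => h₃ j ⟨hj₂, hj₁⟩⟩

section

variable {ι : Type*}

theorem sum_sq_sub_mul_sum (s : Finset ι) (m : ι → ℤ) (e : ℤ) :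
    ∑ i ∈ s, m i ^ 2 - e * ∑ i ∈ s, m i = ∑ i ∈ s, m i * (m i - e) := by
  rw [mul_sum, ← sum_sub_distrib]
  exact sum_congr rfl fun i _ => by ring

theorem sum_sq_sub_sum_eq_of_sum_half (s : Finset ι) (m : ι → ℤ) (k : ℤ)
    (h : ∑ i ∈ s, m i * (m i - 1) / 2 = k * (k - 1) / 2) :
    ∑ i ∈ s, m i ^ 2 - ∑ i ∈ s, m i = k * (k - 1) := by
  have halve (x : ℤ) : 2 * (x * (x - 1) / 2) = x * (x - 1) :=
    Int.two_mul_ediv_two_of_even (Int.even_mul_pred_self x)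
  calc ∑ i ∈ s, m i ^ 2 - ∑ i ∈ s, m i = ∑ i ∈ s, m i * (m i - 1) := by
        simpa using sum_sq_sub_mul_sum s m 1
    _ = 2 * ∑ i ∈ s, m i * (m i - 1) / 2 := by rw [mul_sum]; simp only [halve]
    _ = k * (k - 1) := by rw [h, halve]

variable [Fintype ι] [DecidableEq ι] (m : ι → ℤ) {i₁ i₂ : ι}

theorem sum_sq_sub_mul_sum_le (h : i₁ ≠ i₂) (e : ℤ)
    (hrest : ∀ j, j ≠ i₁ → j ≠ i₂ → 0 ≤ m j ∧ m j ≤ e) :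
    ∑ j, m j ^ 2 - e * ∑ j, m j ≤ m i₁ * (m i₁ - e) + m i₂ * (m i₂ - e) := by
  calc ∑ j, m j ^ 2 - e * ∑ j, m j = ∑ j, m j * (m j - e) := sum_sq_sub_mul_sum _ m e
    _ ≤ ∑ j ∈ {i₁, i₂}, m j * (m j - e) := by
        refine sum_le_sum_of_subset_of_nonpos' (subset_univ _) fun j _ hj => ?_
        simp only [mem_insert, mem_singleton, not_or] at hj
        obtain ⟨hj₀, hje⟩ := hrest j hj.1 hj.2
        exact mul_nonpos_of_nonneg_of_nonpos hj₀ (by linarith)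
    _ = m i₁ * (m i₁ - e) + m i₂ * (m i₂ - e) := sum_pair h

theorem mul_pred_add_mul_pred_le (h : i₁ ≠ i₂) :
    m i₁ * (m i₁ - 1) + m i₂ * (m i₂ - 1) ≤ ∑ j, m j ^ 2 - ∑ j, m j := by
  have hnonneg (x : ℤ) : 0 ≤ x * (x - 1) := by
    rcases le_or_gt x 0 with hx | hx <;> nlinarith
  calc m i₁ * (m i₁ - 1) + m i₂ * (m i₂ - 1) = ∑ j ∈ {i₁, i₂}, m j * (m j - 1) :=
        (sum_pair (f := fun j => m j * (m j - 1)) h).symm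
    _ ≤ ∑ j, m j * (m j - 1) :=
        sum_le_sum_of_subset_of_nonneg (subset_univ _) fun j _ _ => hnonneg (m j)
    _ = ∑ j, m j ^ 2 - ∑ j, m j := by simpa using (sum_sq_sub_mul_sum univ m 1).symm

end

theorem mul_sub_add_mul_sub_le {a b e d : ℤ} (hea : e ≤ a) (heb : e ≤ b)
    (he : 0 ≤ e) (h : a + b + e ≤ d) :
    a * (a - e) + b * (b - e) ≤ (d - 2 * e) * (d - 3 * e) := by
  nlinarith [mul_nonneg (sub_nonneg.2 hea) (sub_nonneg.2 heb)]

theorem lt_add_add_of_genus_zero {d a b e Q S : ℤ} (hS : d < S) (hQS : Q - S = (d - 1) * (d - 2))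
    (hQ : Q ≤ d ^ 2 + 2) (hea : e ≤ a) (heb : e ≤ b) (he : 0 ≤ e)
    (hupper : Q - e * S ≤ a * (a - e) + b * (b - e))
    (hlower : a * (a - 1) + b * (b - 1) ≤ Q - S) :
    d < a + b + e := by
  by_contra! h
  rcases he.eq_or_lt with rfl | he₁
  · nlinarith
  · have := mul_sub_add_mul_sub_le hea heb he h
    nlinarith [mul_nonneg (by linarith : 0 ≤ d ^ 2 + 2 - Q) (by linarith : (0 : ℤ) ≤ e - 1),
      mul_nonneg he (by linarith : 0 ≤ d - 3 * e)]

/-- Noether's lemma. -/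
theorem noether_lemma (n : ℕ) (hn : 3 ≤ n) (d : ℤ) (m : Fin n → ℤ)
    (hd : 0 < d) (hm : ∀ i, 0 ≤ m i)
    (hb : (d - 1) * (d - 2) / 2 - ∑ i, m i * (m i - 1) / 2 = 0)
    (hc1 : -2 ≤ d ^ 2 - ∑ i, (m i) ^ 2)
    (hc2 : d ^ 2 - ∑ i, (m i) ^ 2 ≤ 1)
    (hd1 : d = 1 → d ^ 2 - ∑ i, (m i) ^ 2 < 0) :
    ∃ i₁ i₂ i₃ : Fin n, i₁ ≠ i₂ ∧ i₁ ≠ i₃ ∧ i₂ ≠ i₃ ∧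
      d < m i₁ + m i₂ + m i₃ := by
  obtain ⟨i₁, i₂, i₃, h₁₂, h₁₃, h₂₃, h₃₁, h₃₂, hrest⟩ := exists_three_largest m (by simpa using hn)
  refine ⟨i₁, i₂, i₃, h₁₂, h₁₃, h₂₃, ?_⟩
  have hgenus : ∑ i, m i ^ 2 - ∑ i, m i = (d - 1) * (d - 2) := by
    have := sum_sq_sub_sum_eq_of_sum_half univ m (d - 1) (by rw [sub_sub, one_add_one_eq_two]; linarith)
    rwa [sub_sub, one_add_one_eq_two] at this
  have hsum : d < ∑ i, m i := by
    rcases (show d = 1 ∨ 2 ≤ d by omega) with rfl | hd₂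
    · linarith [hd1 rfl]
    · nlinarith
  exact lt_add_add_of_genus_zero hsum hgenus (by linarith) h₃₁ h₃₂ (hm i₃)
    (sum_sq_sub_mul_sum_le m h₁₂ _ fun j hj₁ hj₂ => ⟨hm j, hrest j hj₁ hj₂⟩)
    (mul_pred_add_mul_pred_le m h₁₂)
end

section
/- If (d, m) satisfies d² - ∑ mᵢ² = -1 and 3d - ∑ mᵢ = 1, then its image (d', m') under any (i₁,i₂,i₃)-Cremona transformation also satisfies d'² - ∑ m'ᵢ² = -1 and 3d' - ∑ m'ᵢ = 1. -/
/-!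
The Cremona transformation is the reflection `p ↦ p + (p · α) α` of the lattice `ℤ H ⊕ ⨁ ℤ Eᵢ`
in the root `α = H - E₁ - E₂ - E₃`. Since `α · α = -2` the reflection is an isometry of the
intersection form, and since `α` is orthogonal to the anticanonical class `3H - ∑ Eᵢ` it fixes
the anticanonical degree.
-/

def cremona {n : ℕ} (i₁ i₂ i₃ : Fin n) (p : ℤ × (Fin n → ℤ)) :
    ℤ × (Fin n → ℤ) :=
  (2 * p.1 - p.2 i₁ - p.2 i₂ - p.2 i₃,
   fun j =>
     if j = i₁ then p.1 - p.2 i₂ - p.2 i₃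
     else if j = i₂ then p.1 - p.2 i₁ - p.2 i₃
     else if j = i₃ then p.1 - p.2 i₁ - p.2 i₂
     else p.2 j)

namespace Cremona

variable {n : ℕ}

-- `(d, m)` stands for the class `dH - ∑ mᵢ Eᵢ`, with `H² = 1`, `Eᵢ² = -1` and `-K = 3H - ∑ Eᵢ`.
def intersection (p q : ℤ × (Fin n → ℤ)) : ℤ := p.1 * q.1 - p.2 ⬝ᵥ q.2

def anticanonicalDegree (p : ℤ × (Fin n → ℤ)) : ℤ := 3 * p.1 - ∑ i, p.2 i

lemma intersection_self (p : ℤ × (Fin n → ℤ)) :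
    intersection p p = p.1 ^ 2 - ∑ i, p.2 i ^ 2 := by
  simp only [intersection, dotProduct, sq]

lemma intersection_add_smul_self (p a : ℤ × (Fin n → ℤ)) (c : ℤ) :
    intersection (p + c • a) (p + c • a)
      = intersection p p + 2 * c * intersection p a + c ^ 2 * intersection a a := by
  simp only [intersection, Prod.fst_add, Prod.snd_add, Prod.smul_fst, Prod.smul_snd,
    add_dotProduct, dotProduct_add, smul_dotProduct, dotProduct_smul, smul_eq_mul,
    dotProduct_comm a.2 p.2]
  ring

lemma intersection_reflect_self {a : ℤ × (Fin n → ℤ)} (ha : intersection a a = -2)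
    (p : ℤ × (Fin n → ℤ)) :
    intersection (p + intersection p a • a) (p + intersection p a • a) = intersection p p := by
  rw [intersection_add_smul_self, ha]
  ring

lemma anticanonicalDegree_add_smul (p a : ℤ × (Fin n → ℤ)) (c : ℤ) :
    anticanonicalDegree (p + c • a) = anticanonicalDegree p + c * anticanonicalDegree a := by
  simp only [anticanonicalDegree, Prod.fst_add, Prod.snd_add, Prod.smul_fst, Prod.smul_snd,
    Pi.add_apply, Pi.smul_apply, smul_eq_mul, Finset.sum_add_distrib, ← Finset.mul_sum]
  ring

def root (i₁ i₂ i₃ : Fin n) : ℤ × (Fin n → ℤ) :=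
  (1, Pi.single i₁ 1 + Pi.single i₂ 1 + Pi.single i₃ 1)

variable {i₁ i₂ i₃ : Fin n}

lemma intersection_root (p : ℤ × (Fin n → ℤ)) :
    intersection p (root i₁ i₂ i₃) = p.1 - p.2 i₁ - p.2 i₂ - p.2 i₃ := by
  simp only [intersection, root, dotProduct_add, dotProduct_single, mul_one]
  ring

lemma anticanonicalDegree_root : anticanonicalDegree (root i₁ i₂ i₃) = 0 := by
  simp only [anticanonicalDegree, root, mul_one, Pi.add_apply, Finset.sum_add_distrib,
    Finset.sum_pi_single', Finset.mem_univ, if_true]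
  norm_num

lemma intersection_root_self (h12 : i₁ ≠ i₂) (h13 : i₁ ≠ i₃) (h23 : i₂ ≠ i₃) :
    intersection (root i₁ i₂ i₃) (root i₁ i₂ i₃) = -2 := by
  rw [intersection_root]
  simp [root, h12, h13, h23, h12.symm, h13.symm, h23.symm]

lemma cremona_eq_reflect (h12 : i₁ ≠ i₂) (h13 : i₁ ≠ i₃) (h23 : i₂ ≠ i₃)
    (p : ℤ × (Fin n → ℤ)) :
    cremona i₁ i₂ i₃ p = p + intersection p (root i₁ i₂ i₃) • root i₁ i₂ i₃ := by
  rw [intersection_root]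
  ext j
  · simp only [cremona, root, Prod.fst_add, Prod.smul_fst, smul_eq_mul]
    ring
  · simp only [cremona, root, Prod.snd_add, Prod.smul_snd, Pi.add_apply, Pi.smul_apply,
      Pi.single_apply, smul_eq_mul]
    split_ifs <;> subst_vars <;> simp_all <;> ring

end Cremona

theorem cremona_preserves_neg_one_conditions {n : ℕ} (i₁ i₂ i₃ : Fin n)
    (h12 : i₁ ≠ i₂) (h13 : i₁ ≠ i₃) (h23 : i₂ ≠ i₃)
    (d : ℤ) (m : Fin n → ℤ)
    (ha : d ^ 2 - ∑ i, (m i) ^ 2 = -1)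
    (hc : 3 * d - ∑ i, m i = 1) :
    (cremona i₁ i₂ i₃ (d, m)).1 ^ 2 -
      ∑ i, ((cremona i₁ i₂ i₃ (d, m)).2 i) ^ 2 = -1 ∧
    3 * (cremona i₁ i₂ i₃ (d, m)).1 -
      ∑ i, (cremona i₁ i₂ i₃ (d, m)).2 i = 1 := by
  open Cremona in
  rw [cremona_eq_reflect h12 h13 h23]
  refine ⟨?_, ?_⟩
  · rw [← intersection_self, intersection_reflect_self (intersection_root_self h12 h13 h23),
      intersection_self, ha]
  · change anticanonicalDegree _ = 1
    rw [anticanonicalDegree_add_smul, anticanonicalDegree_root, mul_zero, add_zero]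
    exact hc
end
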